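/- arXiv:1905.09966 — 5 statements merged into one kernel-verified Lean document; each statement's English description precedes it below -/
import Mathlib

section
/- The generating function of the Catalan numbers satisfies ∑_{n≥0} C_n u^n = 2/(1 + √(1-4u)) for all real u with 0 ≤ u < 1/4. -/
/-!
Put `f = ∑ Cₙ uⁿ` and `g = 2 / (1 + √(1 - 4u))`. The Catalan recurrence
`Cₙ₊₁ = ∑_{i+j=n} Cᵢ Cⱼ` and the Cauchy product give `f = 1 + u f²`, and `g` solves the same
equation. Since `(x - y)(1 - u(x + y)) = 0` for two solutions and `2ug = 1 - √(1 - 4u) < 1`,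
it suffices to know `f ≤ g`; this holds because every partial sum `Sₙ` satisfies
`Sₙ₊₁ ≤ 1 + u Sₙ²`, so the partial sums can never cross the fixed point `g`.
-/

open Finset

lemma catalan_le_four_pow (n : ℕ) : catalan n ≤ 4 ^ n := by
  rw [catalan_eq_centralBinom_div]
  exact (Nat.div_le_self _ _).trans n.centralBinom_le_four_pow

lemma sum_range_sum_antidiagonal_le_sq {R : Type*} [CommSemiring R] [PartialOrder R]
    [IsOrderedRing R] {f : ℕ → R} (hf : ∀ n, 0 ≤ f n) (N : ℕ) :
    ∑ n ∈ range N, ∑ p ∈ antidiagonal n, f p.1 * f p.2 ≤ (∑ n ∈ range N, f n) ^ 2 := by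
  simp_rw [Nat.sum_antidiagonal_eq_sum_range_succ_mk]
  rw [sum_range_diag_flip N fun i j => f i * f j, sq, sum_mul]
  simp_rw [← mul_sum]
  gcongr with i
  · exact hf i
  · exact fun j _ _ => hf j
  · exact Nat.sub_le N i

lemma catalan_mul_pow_succ {R : Type*} [CommSemiring R] (u : R) (n : ℕ) :
    (catalan (n + 1) : R) * u ^ (n + 1) =
      u * ∑ p ∈ antidiagonal n, (catalan p.1 * u ^ p.1) * (catalan p.2 * u ^ p.2) := by
  rw [catalan_succ', Nat.cast_sum, sum_mul, mul_sum]
  refine sum_congr rfl fun p hp => ?_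
  rw [← mem_antidiagonal.1 hp]
  push_cast
  ring

section

variable {u : ℝ}

lemma summable_catalan_mul_pow (hu : |u| < 1 / 4) :
    Summable fun n => (catalan n : ℝ) * u ^ n := by
  refine Summable.of_norm_bounded
    (summable_geometric_of_lt_one (by positivity) (by linarith : 4 * |u| < 1)) fun n => ?_
  rw [norm_mul, norm_pow, Real.norm_natCast, Real.norm_eq_abs, mul_pow]
  gcongr
  exact_mod_cast catalan_le_four_pow n

lemma tsum_catalan_mul_pow_eq (hu : |u| < 1 / 4) :
    ∑' n, (catalan n : ℝ) * u ^ n = 1 + u * (∑' n, (catalan n : ℝ) * u ^ n) ^ 2 := by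
  have hs := summable_catalan_mul_pow hu
  set f := ∑' n, (catalan n : ℝ) * u ^ n
  have hprod : f * f = ∑' n, ∑ p ∈ antidiagonal n,
      (catalan p.1 * u ^ p.1 : ℝ) * (catalan p.2 * u ^ p.2) :=
    tsum_mul_tsum_eq_tsum_sum_antidiagonal_of_summable_norm hs.norm hs.norm
  calc f = 1 + ∑' n, (catalan (n + 1) : ℝ) * u ^ (n + 1) := by
        rw [show f = _ from hs.tsum_eq_zero_add]
        simp
    _ = 1 + u * (f * f) := by
        rw [hprod, ← tsum_mul_left]
        simp_rw [catalan_mul_pow_succ]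
    _ = 1 + u * f ^ 2 := by ring

lemma sum_range_catalan_mul_pow_le (hu : 0 ≤ u) {g : ℝ} (hg0 : 0 ≤ g)
    (hg : 1 + u * g ^ 2 ≤ g) (N : ℕ) : ∑ n ∈ range N, (catalan n : ℝ) * u ^ n ≤ g := by
  induction N with
  | zero => simpa using hg0
  | succ N ih =>
    have hterm : ∀ n, 0 ≤ (catalan n : ℝ) * u ^ n := fun n => by positivity
    calc ∑ n ∈ range (N + 1), (catalan n : ℝ) * u ^ n
        = 1 + u * ∑ n ∈ range N, ∑ p ∈ antidiagonal n,
            (catalan p.1 * u ^ p.1 : ℝ) * (catalan p.2 * u ^ p.2) := by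
          simp_rw [sum_range_succ', catalan_mul_pow_succ, mul_sum]
          simp [add_comm]
      _ ≤ 1 + u * (∑ n ∈ range N, (catalan n : ℝ) * u ^ n) ^ 2 := by
          gcongr
          exact sum_range_sum_antidiagonal_le_sq hterm N
      _ ≤ 1 + u * g ^ 2 := by gcongr
      _ ≤ g := hg

lemma one_add_mul_sq_two_div_one_add_sqrt (hu : u ≤ 1 / 4) :
    1 + u * (2 / (1 + √(1 - 4 * u))) ^ 2 = 2 / (1 + √(1 - 4 * u)) := by
  have hs : √(1 - 4 * u) ^ 2 = 1 - 4 * u := Real.sq_sqrt (by linarith)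
  have hpos : 0 < 1 + √(1 - 4 * u) := by positivity
  generalize √(1 - 4 * u) = s at hs hpos ⊢
  field_simp
  linear_combination hs

lemma two_mul_mul_two_div_one_add_sqrt (hu : u ≤ 1 / 4) :
    2 * u * (2 / (1 + √(1 - 4 * u))) = 1 - √(1 - 4 * u) := by
  have hs : √(1 - 4 * u) ^ 2 = 1 - 4 * u := Real.sq_sqrt (by linarith)
  have hpos : 0 < 1 + √(1 - 4 * u) := by positivity
  generalize √(1 - 4 * u) = s at hs hpos ⊢
  field_simp
  linear_combination hs

end

lemma eq_of_eq_one_add_mul_sq {u x y : ℝ} (hu : 0 ≤ u) (hx : x = 1 + u * x ^ 2)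
    (hy : y = 1 + u * y ^ 2) (hxy : x ≤ y) (huy : 2 * u * y < 1) : x = y := by
  have hfactor : (x - y) * (1 - u * (x + y)) = 0 := by linear_combination hx - hy
  have hpos : 0 < 1 - u * (x + y) := by nlinarith [mul_le_mul_of_nonneg_left hxy hu]
  exact sub_eq_zero.1 ((mul_eq_zero.1 hfactor).resolve_right hpos.ne')

theorem catalan_generating_function (u : ℝ) (hu0 : 0 ≤ u) (hu : u < 1 / 4) :
    ∑' n : ℕ, (catalan n : ℝ) * u ^ n = 2 / (1 + Real.sqrt (1 - 4 * u)) := by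
  have habs : |u| < 1 / 4 := abs_lt.2 ⟨by linarith, hu⟩
  have hroot := one_add_mul_sq_two_div_one_add_sqrt hu.le
  refine eq_of_eq_one_add_mul_sq hu0 (tsum_catalan_mul_pow_eq habs) hroot.symm ?_ ?_
  · exact (summable_catalan_mul_pow habs).tsum_le_of_sum_range_le
      (sum_range_catalan_mul_pow_le hu0 (by positivity) hroot.le)
  · have hsqrt : 0 < √(1 - 4 * u) := Real.sqrt_pos.2 (by linarith)
    rw [two_mul_mul_two_div_one_add_sqrt hu.le]
    linarith
end

section
/- Let F be the free group on a, b, and f* = 3·δ_1 - δ_{a⁻¹} - δ_{b⁻¹} ∈ ℓ¹(F,ℝ). Let N be the set of all elements of F expressible as words in a⁻¹ and b⁻¹ only (including the identity). Then (f*)⁻¹ = (1/3)∑_{s∈N} 3^{-|s|} δ_s, where |s| is the word length, and in particular every coordinate of (f*)⁻¹ lies in [0, 1/3] and the coordinates sum to 1. -/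
/-!
Letters `a ↦ (of a)⁻¹` embed the free monoid into the free group without any cancellation, so
`N` is a copy of the free monoid on two letters and word length there is the free-group norm.
Summing over the `2ⁿ` words of each length gives `∑ wDelta = (1/3) ∑ (2/3)ⁿ = 1`.
Convolving with `f*` on the left only sees `s`, `a s`, `b s`; since a nontrivial element of `N`
starts with exactly one of `a⁻¹`, `b⁻¹`, exactly one of `wDelta (a s)`, `wDelta (b s)` is
nonzero, and it equals `3 wDelta s`; at `s = 1` both vanish and `3 wDelta 1 = 1`.
The right convolution is the mirror image under the anti-automorphism of the free group fixing
the generators, which preserves `N` and word length.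
-/

open FreeGroup
open scoped Classical

/-- `f* = 3·δ₁ - δ_{a⁻¹} - δ_{b⁻¹}` on the free group of rank 2, as a function. -/
noncomputable def fstarF : FreeGroup Bool → ℝ :=
  fun s => 3 * (if s = 1 then 1 else 0) -
    (if s = (FreeGroup.of true)⁻¹ then 1 else 0) -
    (if s = (FreeGroup.of false)⁻¹ then 1 else 0)

/-- The candidate inverse `(1/3)∑_{s∈N} 3^{-|s|} δ_s`, where `N` is the free monoid
generated by `a⁻¹, b⁻¹` inside `F`. -/
noncomputable def wDelta : FreeGroup Bool → ℝ := fun s =>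
  if s ∈ Submonoid.closure ({(FreeGroup.of true)⁻¹, (FreeGroup.of false)⁻¹} : Set (FreeGroup Bool))
  then (1 / 3) * (1 / 3 : ℝ) ^ (FreeGroup.norm s) else 0

theorem List.hasSum_pow_length {α : Type*} [Fintype α] {r : ℝ} (hr₀ : 0 ≤ r)
    (hr : Fintype.card α * r < 1) :
    HasSum (fun l : List α => r ^ l.length) (1 - Fintype.card α * r)⁻¹ := by
  rw [← List.equivSigmaTuple.symm.hasSum_iff]
  have hfiber (n : ℕ) : HasSum (fun _ : Fin n → α => r ^ n) ((Fintype.card α * r) ^ n) := by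
    simpa [mul_pow] using hasSum_fintype fun _ : Fin n → α => r ^ n
  have hgeom := hasSum_geometric_of_lt_one (by positivity) hr
  have hsummable : Summable fun p : Σ n, Fin n → α => r ^ p.1 :=
    (summable_sigma_of_nonneg fun _ => by positivity).2
      ⟨fun n => (hfiber n).summable, hgeom.summable.congr fun n => ((hfiber n).tsum_eq).symm⟩
  convert hsummable.hasSum using 1
  · ext ⟨n, v⟩
    simp [List.equivSigmaTuple]
  · exact hgeom.unique (hsummable.hasSum.sigma hfiber)

section Convolution

variable {G R : Type*} [Group G] [DecidableEq G] [Semiring R] [TopologicalSpace R]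

theorem hasSum_mul_ite_inv_mul_eq (g : G → R) (s x : G) :
    HasSum (fun t => g t * if t⁻¹ * s = x then 1 else 0) (g (s * x⁻¹)) := by
  convert hasSum_ite_eq (s * x⁻¹) (g (s * x⁻¹)) using 1
  ext t
  have h : t⁻¹ * s = x ↔ t = s * x⁻¹ := by
    rw [inv_mul_eq_iff_eq_mul, eq_mul_inv_iff_mul_eq, eq_comm]
  by_cases ht : t = s * x⁻¹ <;> simp [h, ht]

theorem hasSum_ite_eq_mul_inv_mul (g : G → R) (s x : G) :
    HasSum (fun t => (if t = x then 1 else 0) * g (t⁻¹ * s)) (g (x⁻¹ * s)) := by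
  convert hasSum_ite_eq x (g (x⁻¹ * s)) using 1
  ext t
  split_ifs with h
  · rw [h, one_mul]
  · rw [zero_mul]

end Convolution

namespace FreeGroup

variable {α : Type*}

def ofInvHom : FreeMonoid α →* FreeGroup α := FreeMonoid.lift fun a => (of a)⁻¹

theorem ofInvHom_of_mul (a : α) (w : FreeMonoid α) :
    ofInvHom (FreeMonoid.of a * w) = (of a)⁻¹ * ofInvHom w := by
  rw [_root_.map_mul, ofInvHom, FreeMonoid.lift_eval_of]

theorem ofInvHom_eq_mk (w : FreeMonoid α) :
    ofInvHom w = mk (w.toList.map fun a => (a, false)) := by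
  induction w using FreeMonoid.inductionOn' with
  | one => rfl
  | of_mul a w ih => rw [ofInvHom_of_mul, ih, of, inv_mk, mul_mk]; rfl

theorem toWord_ofInvHom [DecidableEq α] (w : FreeMonoid α) :
    (ofInvHom w).toWord = w.toList.map fun a => (a, false) := by
  rw [ofInvHom_eq_mk, toWord_mk]
  exact IsReduced.reduce_eq (List.pairwise_map.2 (List.pairwise_of_forall fun _ _ _ => rfl)).isChain

theorem ofInvHom_injective : Function.Injective (ofInvHom (α := α)) := by
  intro v w h
  have := congrArg toWord h
  rw [toWord_ofInvHom, toWord_ofInvHom] at this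
  exact FreeMonoid.toList.injective
    (List.map_injective_iff.2 (fun _ _ h => congrArg Prod.fst h) this)

theorem norm_ofInvHom [DecidableEq α] (w : FreeMonoid α) : (ofInvHom w).norm = w.length := by
  rw [norm, toWord_ofInvHom, List.length_map]
  rfl

theorem ofInvHom_of_mul_ne_one (a : α) (w : FreeMonoid α) :
    ofInvHom (FreeMonoid.of a * w) ≠ 1 := by
  rw [← _root_.map_one ofInvHom, ofInvHom_injective.ne_iff]
  exact fun h => by simpa using congrArg FreeMonoid.toList h

theorem ofInvHom_of_mul_ne {a b : α} (hab : a ≠ b) (v w : FreeMonoid α) :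
    ofInvHom (FreeMonoid.of a * v) ≠ ofInvHom (FreeMonoid.of b * w) :=
  fun h => hab (List.cons.inj (congrArg FreeMonoid.toList (ofInvHom_injective h))).1

theorem of_mul_mem_range_ofInvHom_iff {a : α} {s : FreeGroup α} :
    of a * s ∈ Set.range ofInvHom ↔ ∃ w, ofInvHom (FreeMonoid.of a * w) = s := by
  simp only [Set.mem_range, ofInvHom_of_mul, inv_mul_eq_iff_eq_mul]

def reverse (s : FreeGroup α) : FreeGroup α := (lift (fun a => MulOpposite.op (of a)) s).unop

@[simp] theorem reverse_mul (s t : FreeGroup α) : reverse (s * t) = reverse t * reverse s := by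
  simp [reverse]

@[simp] theorem reverse_of (a : α) : reverse (of a) = of a := by simp [reverse]

@[simp] theorem reverse_inv (s : FreeGroup α) : reverse s⁻¹ = (reverse s)⁻¹ := by simp [reverse]

@[simp] theorem reverse_one : reverse (1 : FreeGroup α) = 1 := by simp [reverse]

theorem reverse_involutive : Function.Involutive (reverse (α := α)) := by
  intro s
  induction s using FreeGroup.induction_on with
  | C1 => simp
  | of => simp
  | inv_of => simp
  | mul _ _ h₁ h₂ => simp [h₁, h₂]

theorem reverse_ofInvHom (w : FreeMonoid α) : reverse (ofInvHom w) = ofInvHom w.reverse := by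
  induction w using FreeMonoid.inductionOn' with
  | one => rw [_root_.map_one, reverse_one]; rfl
  | of_mul a w ih =>
    rw [ofInvHom_of_mul, reverse_mul, ih, FreeMonoid.reverse_mul, _root_.map_mul]
    simp [ofInvHom]

end FreeGroup

theorem hasSum_mul_fstarF_inv_mul (g : FreeGroup Bool → ℝ) (s : FreeGroup Bool) :
    HasSum (fun t => g t * fstarF (t⁻¹ * s)) (3 * g s - g (s * of true) - g (s * of false)) := by
  have h := (((hasSum_mul_ite_inv_mul_eq g s 1).mul_left 3).sub
    (hasSum_mul_ite_inv_mul_eq g s (of true)⁻¹)).sub (hasSum_mul_ite_inv_mul_eq g s (of false)⁻¹)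
  simp only [inv_one, mul_one, inv_inv] at h
  exact h.congr_fun fun t => by unfold fstarF; ring

theorem hasSum_fstarF_mul_inv_mul (g : FreeGroup Bool → ℝ) (s : FreeGroup Bool) :
    HasSum (fun t => fstarF t * g (t⁻¹ * s)) (3 * g s - g (of true * s) - g (of false * s)) := by
  have h := (((hasSum_ite_eq_mul_inv_mul g s 1).mul_left 3).sub
    (hasSum_ite_eq_mul_inv_mul g s (of true)⁻¹)).sub (hasSum_ite_eq_mul_inv_mul g s (of false)⁻¹)
  simp only [inv_one, one_mul, inv_inv] at h
  exact h.congr_fun fun t => by unfold fstarF; ring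

theorem closure_inv_of_eq_mrange_ofInvHom :
    Submonoid.closure ({(of true)⁻¹, (of false)⁻¹} : Set (FreeGroup Bool)) =
      MonoidHom.mrange ofInvHom := by
  rw [ofInvHom, FreeMonoid.mrange_lift]
  congr 1
  ext x
  simp [or_comm]

theorem wDelta_ofInvHom (w : FreeMonoid Bool) :
    wDelta (ofInvHom w) = 1 / 3 * (1 / 3) ^ w.length := by
  rw [wDelta, closure_inv_of_eq_mrange_ofInvHom, if_pos (MonoidHom.mem_mrange.2 ⟨w, rfl⟩),
    norm_ofInvHom]

theorem wDelta_eq_zero {s : FreeGroup Bool} (hs : s ∉ Set.range ofInvHom) : wDelta s = 0 := by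
  rw [wDelta, closure_inv_of_eq_mrange_ofInvHom, if_neg (by simpa using hs)]

theorem wDelta_mem_Icc (s : FreeGroup Bool) : wDelta s ∈ Set.Icc 0 (1 / 3) := by
  rw [wDelta]
  split_ifs
  · exact ⟨by positivity,
      mul_le_of_le_one_right (by norm_num) (pow_le_one₀ (by norm_num) (by norm_num))⟩
  · norm_num

theorem hasSum_wDelta : HasSum wDelta 1 := by
  rw [← ofInvHom_injective.hasSum_iff fun s hs => wDelta_eq_zero hs,
    ← FreeMonoid.toList.symm.hasSum_iff]
  have h := (List.hasSum_pow_length (α := Bool) (r := 1 / 3) (by norm_num) (by norm_num)).mul_left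
    (1 / 3)
  rw [Fintype.card_bool, show (1 / 3 : ℝ) * (1 - ((2 : ℕ) : ℝ) * (1 / 3))⁻¹ = 1 by norm_num] at h
  exact h.congr_fun fun l => wDelta_ofInvHom _

theorem wDelta_of_mul_eq_zero {a : Bool} {s : FreeGroup Bool}
    (h : ∀ w, ofInvHom (FreeMonoid.of a * w) ≠ s) : wDelta (of a * s) = 0 :=
  wDelta_eq_zero fun hs => let ⟨w, hw⟩ := of_mul_mem_range_ofInvHom_iff.1 hs; h w hw

theorem wDelta_reverse (s : FreeGroup Bool) : wDelta (reverse s) = wDelta s := by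
  by_cases hs : s ∈ Set.range ofInvHom
  · obtain ⟨w, rfl⟩ := hs
    rw [reverse_ofInvHom, wDelta_ofInvHom, wDelta_ofInvHom, FreeMonoid.length_reverse]
  · have hs' : reverse s ∉ Set.range ofInvHom := fun ⟨w, hw⟩ =>
      hs ⟨w.reverse, by rw [← reverse_ofInvHom, hw, reverse_involutive]⟩
    rw [wDelta_eq_zero hs, wDelta_eq_zero hs']

theorem three_mul_wDelta_sub_wDelta_of_mul (s : FreeGroup Bool) :
    3 * wDelta s - wDelta (of true * s) - wDelta (of false * s) = if s = 1 then 1 else 0 := by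
  by_cases hs : s ∈ Set.range ofInvHom
  · obtain ⟨w, rfl⟩ := hs
    cases w using FreeMonoid.casesOn with
    | one =>
      have h₁ := wDelta_ofInvHom 1
      rw [_root_.map_one] at h₁
      rw [_root_.map_one, h₁, wDelta_of_mul_eq_zero (ofInvHom_of_mul_ne_one true),
        wDelta_of_mul_eq_zero (ofInvHom_of_mul_ne_one false), if_pos rfl, FreeMonoid.length_one]
      norm_num
    | of_mul a w =>
      rw [if_neg (ofInvHom_of_mul_ne_one a w), wDelta_ofInvHom, FreeMonoid.length_mul,
        FreeMonoid.length_of]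
      cases a
      · rw [wDelta_of_mul_eq_zero (ofInvHom_of_mul_ne Bool.false_ne_true.symm · w),
          ofInvHom_of_mul, mul_inv_cancel_left, wDelta_ofInvHom]
        ring
      · rw [wDelta_of_mul_eq_zero (ofInvHom_of_mul_ne Bool.false_ne_true · w),
          ofInvHom_of_mul, mul_inv_cancel_left, wDelta_ofInvHom]
        ring
  · have hs₁ : s ≠ 1 := fun h => hs ⟨1, by rw [_root_.map_one, h]⟩
    have hs₂ (a : Bool) : ∀ w, ofInvHom (FreeMonoid.of a * w) ≠ s := fun w h => hs ⟨_, h⟩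
    rw [wDelta_eq_zero hs, wDelta_of_mul_eq_zero (hs₂ true), wDelta_of_mul_eq_zero (hs₂ false),
      if_neg hs₁]
    ring

theorem three_mul_wDelta_sub_wDelta_mul_of (s : FreeGroup Bool) :
    3 * wDelta s - wDelta (s * of true) - wDelta (s * of false) = if s = 1 then 1 else 0 := by
  rw [← wDelta_reverse s, ← wDelta_reverse (s * of true), ← wDelta_reverse (s * of false),
    reverse_mul, reverse_mul, reverse_of, reverse_of, three_mul_wDelta_sub_wDelta_of_mul]
  simp only [reverse_involutive.injective.eq_iff' reverse_one]

theorem wDelta_is_inverse_of_fstar :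
    Summable wDelta ∧
    (∀ s, ∑' t, wDelta t * fstarF (t⁻¹ * s) = if s = 1 then 1 else 0) ∧
    (∀ s, ∑' t, fstarF t * wDelta (t⁻¹ * s) = if s = 1 then 1 else 0) ∧
    (∀ s, 0 ≤ wDelta s ∧ wDelta s ≤ 1 / 3) ∧
    (∑' s, wDelta s) = 1 := by
  refine ⟨hasSum_wDelta.summable, fun s => ?_, fun s => ?_, wDelta_mem_Icc, hasSum_wDelta.tsum_eq⟩
  · rw [(hasSum_mul_fstarF_inv_mul wDelta s).tsum_eq, three_mul_wDelta_sub_wDelta_mul_of]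
  · rw [(hasSum_fstarF_mul_inv_mul wDelta s).tsum_eq, three_mul_wDelta_sub_wDelta_of_mul]
end

section
/- Let Γ be a group, f ∈ ℤΓ, and suppose w ∈ ℓ¹(Γ,ℝ) satisfies w * f* = δ_1. Define φ : ℓ^∞(Γ,ℤ) → (ℝ/ℤ)^Γ by φ(d) = π(d * w), where π reduces each coordinate mod 1 and (d*w)_s = ∑_t d_t w_{t⁻¹s}. Then for every d ∈ ℓ^∞(Γ,ℤ), the point x = φ(d) satisfies ∑_{s} f_s x_{ts} = 0 in ℝ/ℤ for every t ∈ Γ, i.e., φ(d) ∈ X_f. -/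
/-- The hypothesis `hinv` says `w * f* = δ₁`, since `(w * f*)_s = ∑_t w_t f*_{t⁻¹ s}`
and `f*_{t⁻¹ s} = f_{(t⁻¹ s)⁻¹} = f_{s⁻¹ t}`. -/
theorem homoclinic_map_into_Xf {Γ : Type*} [Group Γ] [DecidableEq Γ]
    (f : Γ →₀ ℤ) (w : Γ → ℝ)
    (hw : Summable fun s => |w s|)
    (hinv : ∀ s : Γ, ∑' t, w t * (f (s⁻¹ * t) : ℝ) = if s = 1 then 1 else 0)
    (d : Γ → ℤ) (C : ℕ) (hd : ∀ s, |d s| ≤ (C : ℤ)) :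
    ∀ t : Γ, ∑ s ∈ f.support,
        f s • ((↑(∑' u, (d u : ℝ) * w (u⁻¹ * (t * s)))) : AddCircle (1 : ℝ)) = 0 := by
  intro t
  -- summability of the convolution sums
  have hsum : ∀ g : Γ, Summable (fun u => (d u : ℝ) * w (u⁻¹ * g)) := by
    intro g
    have hinj : Function.Injective (fun u : Γ => u⁻¹ * g) := by
      intro a b h
      simpa using h
    have h1 : Summable (fun u : Γ => |w (u⁻¹ * g)|) := hw.comp_injective hinj
    refine Summable.of_norm ?_
    refine Summable.of_nonneg_of_le (fun u => norm_nonneg _) (fun u => ?_)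
      (h1.mul_left (C : ℝ))
    have hC : |(d u : ℝ)| ≤ (C : ℝ) := by exact_mod_cast hd u
    calc ‖(d u : ℝ) * w (u⁻¹ * g)‖ = |(d u : ℝ)| * |w (u⁻¹ * g)| := by
          rw [norm_mul]; rfl
      _ ≤ (C : ℝ) * |w (u⁻¹ * g)| := by
          exact mul_le_mul_of_nonneg_right hC (abs_nonneg _)
  -- rewriting the finite convolution sum as a tsum, to use `hinv`
  have inner : ∀ g : Γ, (∑ s ∈ f.support, (f s : ℝ) * w (g * s))
      = ∑' v, w v * (f (g⁻¹ * v) : ℝ) := by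
    intro g
    rw [tsum_eq_sum (s := f.support.map ⟨fun s => g * s, mul_right_injective g⟩)]
    · rw [Finset.sum_map]
      refine Finset.sum_congr rfl fun s _ => ?_
      simp [mul_comm]
    · intro v hv
      have hz : f (g⁻¹ * v) = 0 := by
        by_contra h
        apply hv
        simp only [Finset.mem_map, Function.Embedding.coeFn_mk]
        exact ⟨g⁻¹ * v, Finsupp.mem_support_iff.mpr h, by group⟩
      simp [hz]
  -- the key computation
  have key : (∑ s ∈ f.support, (f s : ℝ) * ∑' u, (d u : ℝ) * w (u⁻¹ * (t * s)))
      = (d t : ℝ) := by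
    have h1 : ∀ s ∈ f.support,
        Summable (fun u => (f s : ℝ) * ((d u : ℝ) * w (u⁻¹ * (t * s)))) :=
      fun s _ => (hsum (t * s)).mul_left _
    calc ∑ s ∈ f.support, (f s : ℝ) * ∑' u, (d u : ℝ) * w (u⁻¹ * (t * s))
        = ∑ s ∈ f.support, ∑' u, (f s : ℝ) * ((d u : ℝ) * w (u⁻¹ * (t * s))) := by
          refine Finset.sum_congr rfl fun s _ => ?_
          rw [tsum_mul_left]
      _ = ∑' u, ∑ s ∈ f.support, (f s : ℝ) * ((d u : ℝ) * w (u⁻¹ * (t * s))) :=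
          (Summable.tsum_finsetSum h1).symm
      _ = ∑' u, (d u : ℝ) * (if u⁻¹ * t = 1 then 1 else 0) := by
          refine tsum_congr fun u => ?_
          have h2 : ∑ s ∈ f.support, (f s : ℝ) * ((d u : ℝ) * w (u⁻¹ * (t * s)))
              = (d u : ℝ) * ∑ s ∈ f.support, (f s : ℝ) * w ((u⁻¹ * t) * s) := by
            rw [Finset.mul_sum]
            refine Finset.sum_congr rfl fun s _ => ?_
            rw [mul_assoc]
            ring
          rw [h2, inner (u⁻¹ * t), hinv (u⁻¹ * t)]
      _ = (d t : ℝ) := by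
          rw [tsum_eq_single t]
          · simp
          · intro u hu
            have hne : u⁻¹ * t ≠ 1 := by
              intro h
              exact hu (by rw [← inv_mul_cancel u] at h; exact (mul_left_cancel h).symm)
            simp [hne]
  -- conclude by pushing everything through the quotient map
  set π : ℝ →+ AddCircle (1 : ℝ) :=
    QuotientAddGroup.mk' (AddSubgroup.zmultiples (1 : ℝ)) with hπ
  have hcoe : ∀ r : ℝ, ((r : AddCircle (1 : ℝ))) = π r := fun r => rfl
  calc ∑ s ∈ f.support,
        f s • ((↑(∑' u, (d u : ℝ) * w (u⁻¹ * (t * s)))) : AddCircle (1 : ℝ))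
      = ∑ s ∈ f.support, π ((f s : ℝ) * ∑' u, (d u : ℝ) * w (u⁻¹ * (t * s))) := by
        refine Finset.sum_congr rfl fun s _ => ?_
        rw [hcoe, ← map_zsmul π, zsmul_eq_mul]
    _ = π (∑ s ∈ f.support, (f s : ℝ) * ∑' u, (d u : ℝ) * w (u⁻¹ * (t * s))) :=
        (map_sum π _ _).symm
    _ = π ((d t : ℝ)) := by rw [key]
    _ = 0 := by
        rw [hπ, QuotientAddGroup.mk'_apply, QuotientAddGroup.eq_zero_iff]
        exact ⟨d t, by simp⟩
end

section
/- Let F be the free group on a,b and f = 3 - a - b ∈ ℤF. Every x ∈ X_f is the image under the homoclinic map φ of some d ∈ {0,1,2,3}^F. Concretely: if v ∈ [0,1)^F is the unique lift of x, then d := v·f* + 𝟙 has all coordinates in {0,1,2,3} and φ(d) = x, where 𝟙 is the constant-one element. -/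
/-!
Since `v` lifts a point of `X_f`, each `3 v t - v (t a) - v (t b)` is an integer, and `v ∈ [0,1)`
confines it to `{-1, 0, 1, 2}`. Since `w` is a Green function of `f*`, convolving `v · f*` with `w`
returns `v`, while convolving `𝟙` with `w` gives the total mass `1` of `w`, which vanishes in `ℝ/ℤ`.
-/

lemma add_one_mem_of_coe_eq_zero {p q r : ℝ} (hp : p ∈ Set.Ico (0 : ℝ) 1)
    (hq : q ∈ Set.Ico (0 : ℝ) 1) (hr : r ∈ Set.Ico (0 : ℝ) 1)
    (h : ((3 * p - q - r : ℝ) : AddCircle (1 : ℝ)) = 0) :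
    3 * p - q - r + 1 ∈ ({0, 1, 2, 3} : Set ℝ) := by
  obtain ⟨k, hk⟩ := (AddCircle.coe_eq_zero_iff 1).mp h
  rw [zsmul_one] at hk
  obtain ⟨hp₀, hp₁⟩ := hp
  obtain ⟨hq₀, hq₁⟩ := hq
  obtain ⟨hr₀, hr₁⟩ := hr
  have hlo : (-2 : ℤ) < k := by exact_mod_cast (by linarith : (-2 : ℝ) < k)
  have hhi : k < 3 := by exact_mod_cast (by linarith : (k : ℝ) < 3)
  rw [← hk]
  interval_cases k <;> norm_num

lemma summable_mul_of_abs_le {ι : Type*} {u w : ι → ℝ} {C : ℝ} (hu : ∀ t, |u t| ≤ C)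
    (hw : Summable w) : Summable fun t => u t * w t :=
  (hw.abs.mul_left C).of_norm_bounded fun t => by
    rw [Real.norm_eq_abs, abs_mul]
    exact mul_le_mul_of_nonneg_right (hu t) (abs_nonneg _)

section Group

variable {G : Type*} [Group G]

lemma hasSum_comp_inv_mul_iff {f : G → ℝ} {m : ℝ} (c s : G) :
    HasSum (fun t => f (c * t⁻¹ * s)) m ↔ HasSum f m := by
  let e : G ≃ G := ((Equiv.inv G).trans (Equiv.mulRight s)).trans (Equiv.mulLeft c)
  convert e.hasSum_iff (f := f) using 2
  funext t
  simp [e, mul_assoc]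

lemma hasSum_mul_right_translate_iff (v w : G → ℝ) {m : ℝ} (c s : G) :
    HasSum (fun t => v (t * c) * w (t⁻¹ * s)) m ↔ HasSum (fun t => v t * w (c * t⁻¹ * s)) m := by
  rw [← (Equiv.mulRight c⁻¹).hasSum_iff]
  congr! 2 with t
  simp [mul_assoc]

variable [DecidableEq G] {a b : G} {w : G → ℝ}

lemma hasSum_one_of_green (hw : Summable w)
    (hgreen : ∀ s, 3 * w s - w (a * s) - w (b * s) = if s = 1 then 1 else 0) :
    HasSum w 1 := by
  have hshift : ∀ c : G, HasSum (fun s => w (c * s)) (∑' s, w s) := fun c =>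
    (Equiv.mulLeft c).hasSum_iff.mpr hw.hasSum
  have h := ((hw.hasSum.mul_left 3).sub (hshift a)).sub (hshift b)
  simp only [hgreen] at h
  have hW := h.unique (hasSum_ite_eq 1 1)
  convert hw.hasSum using 1
  linarith

lemma hasSum_fstar_mul_green {v : G → ℝ} {C : ℝ} (hv : ∀ t, |v t| ≤ C) (hw : Summable w)
    (hgreen : ∀ s, 3 * w s - w (a * s) - w (b * s) = if s = 1 then 1 else 0) (s : G) :
    HasSum (fun t => (3 * v t - v (t * a) - v (t * b)) * w (t⁻¹ * s)) (v s) := by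
  have hg : ∀ c, Summable fun t => v t * w (c * t⁻¹ * s) := fun c =>
    summable_mul_of_abs_le hv ((hasSum_comp_inv_mul_iff c s).mpr hw.hasSum).summable
  have hT : ∀ c, HasSum (fun t => v (t * c) * w (t⁻¹ * s)) (∑' t, v t * w (c * t⁻¹ * s)) :=
    fun c => (hasSum_mul_right_translate_iff v w c s).mpr (hg c).hasSum
  have hcombine : 3 * ∑' t, v t * w (1 * t⁻¹ * s) - ∑' t, v t * w (a * t⁻¹ * s)
      - ∑' t, v t * w (b * t⁻¹ * s) = v s := by
    refine ((((hg 1).hasSum.mul_left 3).sub (hg a).hasSum).sub (hg b).hasSum).unique ?_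
    refine (hasSum_ite_eq s (v s)).congr_fun fun t => ?_
    have h := hgreen (t⁻¹ * s)
    simp only [inv_mul_eq_one, ← mul_assoc, one_mul] at h ⊢
    split_ifs at h ⊢ with hts
    · subst hts
      linear_combination v t * h
    · linear_combination v t * h
  rw [← hcombine]
  refine (((hT 1).mul_left 3).sub (hT a) |>.sub (hT b)).congr_fun fun t => ?_
  rw [mul_one]
  ring

end Group

theorem four_cover_general (a b : FreeGroup Bool)
    (w : FreeGroup Bool → ℝ) (hw : Summable fun s => |w s|)
    (hw2 : ∀ s, 3 * w s - w (a * s) - w (b * s) = if s = 1 then 1 else 0)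
    (x : FreeGroup Bool → AddCircle (1 : ℝ))
    (hx : ∀ t, (3 : ℤ) • x t - x (t * a) - x (t * b) = 0)
    (v : FreeGroup Bool → ℝ) (hv : ∀ s, v s ∈ Set.Ico (0 : ℝ) 1)
    (hvx : ∀ s, ((v s : ℝ) : AddCircle (1 : ℝ)) = x s) :
    (∀ t, (3 * v t - v (t * a) - v (t * b) + 1) ∈ ({0, 1, 2, 3} : Set ℝ)) ∧
    (∀ s, ((↑(∑' t, (3 * v t - v (t * a) - v (t * b) + 1) * w (t⁻¹ * s))) :
        AddCircle (1 : ℝ)) = x s) := by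
  have hw' : Summable w := summable_abs_iff.mp hw
  have hv_le : ∀ t, |v t| ≤ 1 := fun t => abs_le.mpr ⟨by linarith [(hv t).1], (hv t).2.le⟩
  refine ⟨fun t => add_one_mem_of_coe_eq_zero (hv t) (hv _) (hv _) ?_, fun s => ?_⟩
  · rw [← hx t, ← hvx, ← hvx, ← hvx, AddCircle.coe_sub, AddCircle.coe_sub, ← AddCircle.coe_zsmul,
      zsmul_eq_mul, Int.cast_ofNat]
  · have hsum := (hasSum_fstar_mul_green hv_le hw' hw2 s).add
      ((hasSum_comp_inv_mul_iff 1 s).mpr (hasSum_one_of_green hw' hw2))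
    simp only [one_mul, ← add_one_mul] at hsum
    rw [hsum.tsum_eq, AddCircle.coe_add, hvx, AddCircle.coe_period, add_zero]

theorem four_cover (a b : FreeGroup Bool) (ha : a = FreeGroup.of true)
    (hb : b = FreeGroup.of false)
    (w : FreeGroup Bool → ℝ) (hw : Summable fun s => |w s|)
    (hw1 : ∀ s, 3 * w s - w (s * a) - w (s * b) = if s = 1 then 1 else 0)
    (hw2 : ∀ s, 3 * w s - w (a * s) - w (b * s) = if s = 1 then 1 else 0)
    (x : FreeGroup Bool → AddCircle (1 : ℝ))
    (hx : ∀ t, (3 : ℤ) • x t - x (t * a) - x (t * b) = 0)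
    (v : FreeGroup Bool → ℝ) (hv : ∀ s, v s ∈ Set.Ico (0 : ℝ) 1)
    (hvx : ∀ s, ((v s : ℝ) : AddCircle (1 : ℝ)) = x s) :
    (∀ t, (3 * v t - v (t * a) - v (t * b) + 1) ∈ ({0, 1, 2, 3} : Set ℝ)) ∧
    (∀ s, ((↑(∑' t, (3 * v t - v (t * a) - v (t * b) + 1) * w (t⁻¹ * s))) :
        AddCircle (1 : ℝ)) = x s) :=
  four_cover_general a b w hw hw2 x hx v hv hvx
end

section
/- Let Γ be a group with a homomorphism [·] : Γ → ℤ, let a, b ∈ Γ with [a] = [b] = 1, M ≥ 3, and f = M - a - b. Suppose y ∈ (ℝ/ℤ)^Γ is nonzero, satisfies M y_s - y_{sa⁻¹} - y_{sb⁻¹} = 0 for all s ∈ Γ, and the set {[s] : y_s ≠ 0} is bounded below. Then there exists s₀ ∈ Γ with y_{s₀} = k/M + ℤ for some integer k with 1 ≤ k ≤ M-1. -/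
lemma zsmul_eq_zero_addCircle (M : ℤ) (hM : 0 < M) (x : AddCircle (1 : ℝ)) (hx : x ≠ 0)
    (h : M • x = 0) :
    ∃ k : ℤ, 1 ≤ k ∧ k ≤ M - 1 ∧ x = (((k : ℝ) / (M : ℝ) : ℝ) : AddCircle (1 : ℝ)) := by
  obtain ⟨r, hr, rfl⟩ : ∃ r : ℝ, r ∈ Set.Ico (0:ℝ) 1 ∧ (r : AddCircle (1:ℝ)) = x := by
    refine ⟨(AddCircle.equivIco (1:ℝ) 0 x : ℝ), by simpa using (AddCircle.equivIco (1:ℝ) 0 x).2,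
      (AddCircle.equivIco (1:ℝ) 0).symm_apply_apply x⟩
  have h' : ((M • r : ℝ) : AddCircle (1:ℝ)) = 0 := by
    rw [← h, ← AddCircle.coe_zsmul]
  rw [AddCircle.coe_eq_zero_iff] at h'
  obtain ⟨n, hn⟩ := h'
  simp only [zsmul_eq_mul, mul_one] at hn
  have hrn : r = (n : ℝ) / M := by
    have hMR : (0:ℝ) < M := by exact_mod_cast hM
    field_simp
    linarith [hn]
  have hMR : (0:ℝ) < M := by exact_mod_cast hM
  have hn0 : 0 < n := by
    rcases lt_or_eq_of_le (hr.1) with h0 | h0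
    · have : (0:ℝ) < n := by
        have h1 := h0; rw [hrn] at h1
        by_contra hc
        push_neg at hc
        have : (n:ℝ)/M ≤ 0 := div_nonpos_of_nonpos_of_nonneg hc (le_of_lt hMR)
        linarith
      exact_mod_cast this
    · exact absurd (by rw [← h0]; simp) hx
  have hnM : n < M := by
    have : (n : ℝ) / M < 1 := hrn ▸ hr.2
    have : (n : ℝ) < M := by
      have := (div_lt_one hMR).mp this; exact this
    exact_mod_cast this
  exact ⟨n, hn0, by omega, by rw [hrn]⟩

theorem support_min_gives_rational_coordinate {Γ : Type*} [Group Γ]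
    (l : Γ →* Multiplicative ℤ) (a b : Γ)
    (hla : l a = Multiplicative.ofAdd 1) (hlb : l b = Multiplicative.ofAdd 1)
    (M : ℤ) (hM : 3 ≤ M)
    (y : Γ → AddCircle (1 : ℝ)) (hy : y ≠ 0)
    (hrel : ∀ s, M • y s - y (s * a⁻¹) - y (s * b⁻¹) = 0)
    (hbdd : BddBelow ((fun s => Multiplicative.toAdd (l s)) '' {s | y s ≠ 0})) :
    ∃ s₀ : Γ, ∃ k : ℤ, 1 ≤ k ∧ k ≤ M - 1 ∧
      y s₀ = (((k : ℝ) / (M : ℝ) : ℝ) : AddCircle (1 : ℝ)) := by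
  set S := (fun s => Multiplicative.toAdd (l s)) '' {s | y s ≠ 0} with hS
  have hne : ∃ z, z ∈ S := by
    obtain ⟨s, hs⟩ := Function.ne_iff.mp hy
    exact ⟨_, ⟨s, hs, rfl⟩⟩
  obtain ⟨lb, hlbS⟩ := hbdd
  obtain ⟨m, hmS, hmin⟩ := Int.exists_least_of_bdd ⟨lb, fun z hz => hlbS hz⟩ hne
  obtain ⟨s₀, hs₀, hms₀⟩ := hmS
  have hzero : ∀ t : Γ, Multiplicative.toAdd (l t) < m → y t = 0 := by
    intro t ht
    by_contra h
    exact absurd (hmin _ ⟨t, h, rfl⟩) (not_le.mpr ht)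
  have hla' : Multiplicative.toAdd (l (s₀ * a⁻¹)) = m - 1 := by
    simp [map_mul, map_inv, hla, ← hms₀, sub_eq_add_neg]
  have hlb' : Multiplicative.toAdd (l (s₀ * b⁻¹)) = m - 1 := by
    simp [map_mul, map_inv, hlb, ← hms₀, sub_eq_add_neg]
  simp only at hms₀
  have h0 : M • y s₀ = 0 := by
    have h := hrel s₀
    rw [hzero (s₀ * a⁻¹) (by rw [hla']; omega), hzero (s₀ * b⁻¹) (by rw [hlb']; omega)] at h
    simpa using h
  obtain ⟨k, h1, h2, h3⟩ := zsmul_eq_zero_addCircle M (by omega) (y s₀) hs₀ h0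
  exact ⟨s₀, k, h1, h2, h3⟩
end
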